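/- arXiv:1901.10376 — 8 statements merged into one kernel-verified Lean document; each statement's English description precedes it below -/
import Mathlib

section
/- Fix α ∈ (0,1) and define ψ(i,j) = Γ(i+1)/Γ(i+1−α) + Γ(j+1)/Γ(j+1−α) − Γ(i+j+1)/Γ(i+j+1−α) for natural numbers i, j. Then for every i ≥ 0, j > 0 and k > 0 one has ψ(i+k, j) > ψ(i, j), and ψ(i, 0) = 1/Γ(1−α) > 0 for all i ≥ 0. -/
/-!
Write `ψ(i, j) = F i + F j - F (i + j)` with `F x = Γ(x+1)/Γ(x+1-α)`, the generalised falling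
power `x^{(α)}`. Its forward difference is `α · x^{(α-1)}`, and for `α < 1` the map
`x ↦ x^{(α-1)}` strictly decreases along the integers, since one step multiplies it by
`(x+1)/(x+2-α) < 1`. So `F` is strictly concave on `ℕ`, which makes `i ↦ F i - F (i + j)`
strictly increasing for `j > 0`.
-/

noncomputable def psi (α : ℝ) (i j : ℕ) : ℝ :=
  Real.Gamma ((i : ℝ) + 1) / Real.Gamma ((i : ℝ) + 1 - α)
    + Real.Gamma ((j : ℝ) + 1) / Real.Gamma ((j : ℝ) + 1 - α)
    - Real.Gamma ((i : ℝ) + (j : ℝ) + 1) / Real.Gamma ((i : ℝ) + (j : ℝ) + 1 - α)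

open Real

noncomputable def gammaRatio (α x : ℝ) : ℝ :=
  Gamma (x + 1) / Gamma (x + 1 - α)

lemma gammaRatio_pos {α x : ℝ} (hx : 0 < x + 1) (hxα : 0 < x + 1 - α) :
    0 < gammaRatio α x :=
  div_pos (Gamma_pos_of_pos hx) (Gamma_pos_of_pos hxα)

lemma gammaRatio_add_one {α x : ℝ} (hx : x + 1 ≠ 0) (hxα : x + 1 - α ≠ 0) :
    gammaRatio α (x + 1) = (x + 1) / (x + 1 - α) * gammaRatio α x := by
  rw [gammaRatio, gammaRatio, ← mul_div_mul_comm, ← Gamma_add_one hx, ← Gamma_add_one hxα]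
  ring_nf

lemma gammaRatio_add_one_sub {α x : ℝ} (hx : x + 1 ≠ 0) (hxα : x + 1 - α ≠ 0) :
    gammaRatio α (x + 1) - gammaRatio α x = α * gammaRatio (α - 1) x := by
  rw [gammaRatio_add_one hx hxα, gammaRatio, gammaRatio,
    show x + 1 - (α - 1) = (x + 1 - α) + 1 by ring, Gamma_add_one hxα]
  field_simp
  ring

lemma gammaRatio_add_one_lt {β x : ℝ} (hβ : β < 0) (hx : 0 < x + 1) :
    gammaRatio β (x + 1) < gammaRatio β x := by
  have hpos : 0 < gammaRatio β x := gammaRatio_pos hx (by linarith)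
  have hfactor : (x + 1) / (x + 1 - β) < 1 := (div_lt_one (by linarith)).2 (by linarith)
  rw [gammaRatio_add_one (by linarith) (by linarith)]
  exact mul_lt_of_lt_one_left hpos hfactor

lemma strictAnti_gammaRatio_natCast {β : ℝ} (hβ : β < 0) :
    StrictAnti fun n : ℕ => gammaRatio β n :=
  strictAnti_nat_of_succ_lt fun n => by
    simpa only [Nat.cast_succ] using gammaRatio_add_one_lt hβ (by positivity)

lemma strictAnti_gammaRatio_natCast_succ_sub {α : ℝ} (hα₀ : 0 < α) (hα₁ : α < 1) :
    StrictAnti fun n : ℕ => gammaRatio α (n + 1 : ℕ) - gammaRatio α n := by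
  have hdiff (n : ℕ) : gammaRatio α (n + 1 : ℕ) - gammaRatio α n = α * gammaRatio (α - 1) n := by
    have hn : (0 : ℝ) ≤ n := n.cast_nonneg
    rw [Nat.cast_succ, gammaRatio_add_one_sub (by linarith) (by linarith)]
  simp only [hdiff]
  exact (strictAnti_gammaRatio_natCast (by linarith)).const_mul hα₀

lemma strictMono_add_sub_apply_add {β : Type*} [AddCommGroup β] [LinearOrder β]
    [IsOrderedAddMonoid β] {f : ℕ → β} (hf : StrictAnti fun n => f (n + 1) - f n) {j : ℕ}
    (hj : 0 < j) : StrictMono fun i => f i + f j - f (i + j) :=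
  strictMono_nat_of_lt_succ fun i => by
    have hstep : f (i + j + 1) - f (i + j) < f (i + 1) - f i := hf (Nat.lt_add_of_pos_right hj)
    rw [Nat.add_right_comm i 1 j]
    rw [sub_lt_sub_iff] at hstep ⊢
    calc f i + f j + f (i + j + 1) = f (i + j + 1) + f i + f j := by abel
      _ < f (i + 1) + f (i + j) + f j := add_lt_add_left hstep _
      _ = f (i + 1) + f j + f (i + j) := by abel

lemma psi_eq_gammaRatio (α : ℝ) (i j : ℕ) :
    psi α i j = gammaRatio α i + gammaRatio α j - gammaRatio α (i + j : ℕ) := by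
  simp only [psi, gammaRatio, Nat.cast_add]

/-- Monotonicity of ψ in its first argument (when the second is positive), and
constancy and positivity of ψ(·,0). -/
theorem psi_strict_mono_and_psi_zero (α : ℝ) (hα : α ∈ Set.Ioo (0:ℝ) 1) :
    (∀ i j k : ℕ, 0 < j → 0 < k → psi α i j < psi α (i + k) j) ∧
      (∀ i : ℕ, psi α i 0 = 1 / Real.Gamma (1 - α) ∧ 0 < 1 / Real.Gamma (1 - α)) := by
  obtain ⟨hα₀, hα₁⟩ := hα
  refine ⟨fun i j k hj hk => ?_, fun i => ⟨?_, ?_⟩⟩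
  · simpa only [psi_eq_gammaRatio] using
      strictMono_add_sub_apply_add (f := fun n : ℕ => gammaRatio α n)
        (strictAnti_gammaRatio_natCast_succ_sub hα₀ hα₁) hj
        (Nat.lt_add_of_pos_right hk)
  · simp [psi, Gamma_one]
  · exact one_div_pos.2 (Gamma_pos_of_pos (by linarith))
end

section
/- Fix α ∈ (0,1). For all integers i ≥ 0 and j > 0, the inequality Γ(i+1)Γ(i+j+2−α) > Γ(i+2−α)Γ(i+j+1) holds. -/
/-!
With `R(y) = Γ(y + b) / Γ(y)` and `b > 0`, the functional equation gives
`R(y + 1) = R(y) · (y + b) / y > R(y)` for `y > 0`, so `n ↦ R(x + n)` is strictly increasing.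
The theorem is `R(i + 1) < R(i + 1 + j)` for `b = 1 - α`.
-/

open Real

namespace Real

variable {x b : ℝ}

lemma Gamma_add_div_Gamma_lt_succ (hx : 0 < x) (hb : 0 < b) :
    Gamma (x + b) / Gamma x < Gamma (x + 1 + b) / Gamma (x + 1) := by
  have hΓx := Gamma_pos_of_pos hx
  have hΓxb := Gamma_pos_of_pos (add_pos hx hb)
  rw [add_right_comm, Gamma_add_one hx.ne', Gamma_add_one (add_pos hx hb).ne',
    mul_div_mul_comm, lt_mul_iff_one_lt_left (div_pos hΓxb hΓx), one_lt_div hx]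
  linarith

lemma strictMono_Gamma_add_div_Gamma_add_natCast (hx : 0 < x) (hb : 0 < b) :
    StrictMono fun n : ℕ => Gamma (x + n + b) / Gamma (x + n) :=
  strictMono_nat_of_lt_succ fun n => by
    simpa only [Nat.cast_succ, ← add_assoc] using
      Gamma_add_div_Gamma_lt_succ (by positivity : 0 < x + n) hb

end Real

/-- The key gamma-ratio inequality: Γ(i+1)Γ(i+j+2-α) > Γ(i+2-α)Γ(i+j+1). -/
theorem gamma_ratio_inequality (α : ℝ) (hα : α ∈ Set.Ioo (0:ℝ) 1) (i j : ℕ) (hj : 0 < j) :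
    Real.Gamma ((i : ℝ) + 2 - α) * Real.Gamma ((i : ℝ) + (j : ℝ) + 1)
      < Real.Gamma ((i : ℝ) + 1) * Real.Gamma ((i : ℝ) + (j : ℝ) + 2 - α) := by
  have hx : (0 : ℝ) < i + 1 := by positivity
  have hb : 0 < 1 - α := sub_pos.mpr hα.2
  have hR := strictMono_Gamma_add_div_Gamma_add_natCast hx hb hj
  simp only [Nat.cast_zero, add_zero] at hR
  rw [div_lt_div_iff₀ (Gamma_pos_of_pos hx) (Gamma_pos_of_pos (by positivity))] at hR
  rwa [show (i : ℝ) + 1 + (1 - α) = i + 2 - α by ring, add_right_comm _ 1 (j : ℝ),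
    show (i : ℝ) + j + 1 + (1 - α) = i + j + 2 - α by ring, mul_comm _ (Gamma (i + 1))] at hR
end

section
/- Let α ∈ (0,1), ψ(i,j) = Γ(i+1)/Γ(i+1−α) + Γ(j+1)/Γ(j+1−α) − Γ(i+j+1)/Γ(i+j+1−α), and φ(i,j) = Γ(i+1)/Γ(i+2−α) − Γ(i+j+1)/Γ(i+j+2−α). Then for all i, j ≥ 1, ψ(i,j) = ψ(1,1) − α φ(0,1) + α Σ_{k=0}^{i−1} Σ_{l=0}^{j−1} φ(k+l, 1). -/
noncomputable def phi (α : ℝ) (i j : ℕ) : ℝ :=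
  Real.Gamma ((i : ℝ) + 1) / Real.Gamma ((i : ℝ) + 2 - α)
    - Real.Gamma ((i : ℝ) + (j : ℝ) + 1) / Real.Gamma ((i : ℝ) + (j : ℝ) + 2 - α)

/-!
Write `g n = Γ(n+1)/Γ(n+1-α)` and `h n = Γ(n+1)/Γ(n+2-α)`, so that `ψ(i,j) = g i + g j - g (i+j)`
and `φ(m,1) = h m - h (m+1)`. The Gamma recurrence gives `g (n+1) - g n = α h n`, hence
`ψ(i+1,j) - ψ(i,j) = α (h i - h (i+j))`, which is the telescoped inner sum `α ∑_{l<j} φ(i+l,1)`.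
Since `ψ(0,j) = g 0`, induction on `i` yields `ψ(i,j) = g 0 + α ∑_{k<i} ∑_{l<j} φ(k+l,1)` for all
`i, j`, and the case `i = j = 1` identifies `g 0` with `ψ(1,1) - α φ(0,1)`.
-/

/-- Mathlib's `Γ` is `0` at its poles; there both sides vanish, or agree directly when `y = 0`. -/
theorem Real.Gamma_add_one_div_Gamma_add_one {x : ℝ} (hx : x ≠ 0) (y : ℝ) :
    Real.Gamma (x + 1) / Real.Gamma (y + 1)
      = Real.Gamma x / Real.Gamma y + (x - y) * Real.Gamma x / Real.Gamma (y + 1) := by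
  rw [Real.Gamma_add_one hx]
  rcases eq_or_ne y 0 with rfl | hy
  · simp [Real.Gamma_zero]
  rw [Real.Gamma_add_one hy]
  rcases eq_or_ne (Real.Gamma y) 0 with hΓ | hΓ
  · simp [hΓ]
  field_simp
  ring

noncomputable def psiTerm (α : ℝ) (n : ℕ) : ℝ :=
  Real.Gamma ((n : ℝ) + 1) / Real.Gamma ((n : ℝ) + 1 - α)

noncomputable def phiTerm (α : ℝ) (n : ℕ) : ℝ :=
  Real.Gamma ((n : ℝ) + 1) / Real.Gamma ((n : ℝ) + 2 - α)

theorem psi_eq_psiTerm (α : ℝ) (i j : ℕ) :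
    psi α i j = psiTerm α i + psiTerm α j - psiTerm α (i + j) := by
  simp only [psi, psiTerm, Nat.cast_add]

theorem phi_eq_phiTerm (α : ℝ) (i j : ℕ) :
    phi α i j = phiTerm α i - phiTerm α (i + j) := by
  simp only [phi, phiTerm, Nat.cast_add]

theorem psiTerm_succ (α : ℝ) (n : ℕ) :
    psiTerm α (n + 1) = psiTerm α n + α * phiTerm α n := by
  have h := Real.Gamma_add_one_div_Gamma_add_one (x := (n : ℝ) + 1) (by positivity)
    ((n : ℝ) + 1 - α)
  simp only [psiTerm, phiTerm, Nat.cast_succ]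
  rw [show (n : ℝ) + 1 + 1 - α = (n : ℝ) + 1 - α + 1 by ring, h,
    show (n : ℝ) + 2 - α = (n : ℝ) + 1 - α + 1 by ring]
  ring

theorem sum_range_phi_one (α : ℝ) (k j : ℕ) :
    ∑ l ∈ Finset.range j, phi α (k + l) 1 = phiTerm α k - phiTerm α (k + j) := by
  simp only [phi_eq_phiTerm, add_assoc]
  exact Finset.sum_range_sub' (fun l => phiTerm α (k + l)) j

theorem psi_zero_left (α : ℝ) (j : ℕ) : psi α 0 j = psiTerm α 0 := by
  rw [psi_eq_psiTerm, zero_add, add_sub_cancel_right]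

theorem psi_succ_left (α : ℝ) (i j : ℕ) :
    psi α (i + 1) j = psi α i j + α * (phiTerm α i - phiTerm α (i + j)) := by
  rw [psi_eq_psiTerm, psi_eq_psiTerm, add_right_comm i 1 j, psiTerm_succ, psiTerm_succ]
  ring

theorem psi_eq_psiTerm_zero_add_double_sum (α : ℝ) (i j : ℕ) :
    psi α i j = psiTerm α 0
      + α * ∑ k ∈ Finset.range i, ∑ l ∈ Finset.range j, phi α (k + l) 1 := by
  induction i with
  | zero => simp [psi_zero_left]
  | succ i ih => rw [psi_succ_left, ih, Finset.sum_range_succ, sum_range_phi_one]; ring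

theorem psi_double_sum_general (α : ℝ) (i j : ℕ) :
    psi α i j = psi α 1 1 - α * phi α 0 1
      + α * ∑ k ∈ Finset.range i, ∑ l ∈ Finset.range j, phi α (k + l) 1 := by
  have h11 : psi α 1 1 = psiTerm α 0 + α * phi α 0 1 := by
    simpa using psi_eq_psiTerm_zero_add_double_sum α 1 1
  rw [psi_eq_psiTerm_zero_add_double_sum, h11]
  ring

/-- The double-sum representation of ψ. -/
theorem psi_double_sum (α : ℝ) (hα : α ∈ Set.Ioo (0:ℝ) 1) (i j : ℕ)
    (hi : 1 ≤ i) (hj : 1 ≤ j) :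
    psi α i j = psi α 1 1 - α * phi α 0 1
      + α * ∑ k ∈ Finset.range i, ∑ l ∈ Finset.range j, phi α (k + l) 1 :=
  psi_double_sum_general α i j
end

section
/- Let α ∈ (0,1), i, j ∈ ℕ, and let k, l satisfy 0 ≤ k ≤ i−1 and 0 ≤ l ≤ j−1. Define φ(m,1) = (1−α)Γ(m+1)/Γ(m+3−α). Then φ(k+l,1)·φ(i+j,1) − φ(i+l,1)·φ(j+k,1) > 0. -/
/-! Put `f m = Γ(m+1)/Γ(m+3-α)`, so that `φ(m,1) = (1-α) f m`. By `Γ(x+1) = xΓ(x)` the ratio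
`f (m+1) / f m = (m+1)/(m+3-α)` is strictly increasing in `m` (because `3-α > 1`), i.e. `f` is
strictly log-convex. For a log-convex positive sequence, `f b * f c < f a * f d` whenever
`a + d = b + c` and `a` is strictly the smallest of the four indices; here
`a = k+l`, `b = i+l`, `c = j+k`, `d = i+j`. -/

open Real

noncomputable def phiOne (α : ℝ) (m : ℕ) : ℝ :=
  (1 - α) * Real.Gamma ((m : ℝ) + 1) / Real.Gamma ((m : ℝ) + 3 - α)

section LogConvex

variable {f : ℕ → ℝ}

theorem mul_lt_mul_add_of_strictMono_succ_div (hf : ∀ n, 0 < f n)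
    (hr : StrictMono fun n => f (n + 1) / f n) {a d s : ℕ} (had : a < d) (hs : 0 < s) :
    f (a + s) * f d < f a * f (d + s) := by
  induction s, hs using Nat.le_induction with
  | base =>
    have := hr had
    show f (a + 1) * f d < f a * f (d + 1)
    rwa [div_lt_div_iff₀ (hf a) (hf d), mul_comm (f (d + 1))] at this
  | succ s _ ih =>
    calc f (a + s + 1) * f d = f (a + s + 1) / f (a + s) * (f (a + s) * f d) := by
          rw [← mul_assoc, div_mul_cancel₀ _ (hf _).ne']
      _ < f (d + s + 1) / f (d + s) * (f a * f (d + s)) :=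
          mul_lt_mul'' (hr (by omega)) ih (div_pos (hf _) (hf _)).le
            (mul_pos (hf _) (hf _)).le
      _ = f a * f (d + s + 1) := by rw [mul_left_comm, div_mul_cancel₀ _ (hf _).ne']

theorem mul_lt_mul_of_strictMono_succ_div (hf : ∀ n, 0 < f n)
    (hr : StrictMono fun n => f (n + 1) / f n) {a b c d : ℕ} (hab : a < b) (hac : a < c)
    (hsum : a + d = b + c) : f b * f c < f a * f d := by
  obtain ⟨s, rfl⟩ := Nat.exists_eq_add_of_lt hab
  obtain rfl : d = c + (s + 1) := by omega
  exact mul_lt_mul_add_of_strictMono_succ_div hf hr hac (Nat.succ_pos s)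

end LogConvex

section GammaQuot

noncomputable def gammaQuot (c : ℝ) (m : ℕ) : ℝ :=
  Gamma ((m : ℝ) + 1) / Gamma ((m : ℝ) + c)

variable {c : ℝ}

theorem gammaQuot_pos (hc : 0 < c) (m : ℕ) : 0 < gammaQuot c m :=
  div_pos (Gamma_pos_of_pos (by positivity)) (Gamma_pos_of_pos (by positivity))

theorem gammaQuot_succ_div (hc : 0 < c) (m : ℕ) :
    gammaQuot c (m + 1) / gammaQuot c m = ((m : ℝ) + 1) / ((m : ℝ) + c) := by
  have h1 : (m : ℝ) + 1 ≠ 0 := by positivity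
  have hc' : (m : ℝ) + c ≠ 0 := by positivity
  simp only [gammaQuot, Nat.cast_succ, add_right_comm _ (1 : ℝ) c, Gamma_add_one h1,
    Gamma_add_one hc']
  field_simp

theorem strictMono_gammaQuot_succ_div (hc : 1 < c) :
    StrictMono fun m => gammaQuot c (m + 1) / gammaQuot c m := by
  refine strictMono_nat_of_lt_succ fun m => ?_
  simp only [gammaQuot_succ_div (zero_lt_one.trans hc), Nat.cast_succ]
  rw [div_lt_div_iff₀ (by positivity) (by positivity)]
  nlinarith

end GammaQuot

theorem phiOne_eq_mul_gammaQuot (α : ℝ) (m : ℕ) :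
    phiOne α m = (1 - α) * gammaQuot (3 - α) m := by
  rw [phiOne, gammaQuot, mul_div_assoc, add_sub_assoc]

/-- The strict inequality φ(k+l,1)φ(i+j,1) - φ(i+l,1)φ(j+k,1) > 0. -/
theorem phi_product_inequality (α : ℝ) (hα : α ∈ Set.Ioo (0:ℝ) 1)
    (i j k l : ℕ) (hk : k ≤ i - 1) (hi : 1 ≤ i) (hl : l ≤ j - 1) (hj : 1 ≤ j) :
    0 < phiOne α (k + l) * phiOne α (i + j) - phiOne α (i + l) * phiOne α (j + k) := by
  have hc : 1 < 3 - α := by linarith [hα.2]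
  have key : gammaQuot (3 - α) (i + l) * gammaQuot (3 - α) (j + k) <
      gammaQuot (3 - α) (k + l) * gammaQuot (3 - α) (i + j) :=
    mul_lt_mul_of_strictMono_succ_div (gammaQuot_pos (by linarith))
      (strictMono_gammaQuot_succ_div hc) (by omega) (by omega) (by omega)
  simp only [phiOne_eq_mul_gammaQuot]
  have h1α : 0 < (1 - α) ^ 2 := pow_pos (by linarith [hα.2]) 2
  linear_combination mul_pos h1α (sub_pos.2 key)
end

section
/- Fix α ∈ (0,1) and set ψ(i,j) = Γ(i+1)/Γ(i+1−α) + Γ(j+1)/Γ(j+1−α) − Γ(i+j+1)/Γ(i+j+1−α). Then the symmetric 2×2 matrix with entries ψ(2,2), ψ(1,2), ψ(2,1), ψ(1,1) is positive definite; in particular ψ(2,2) = 4(6−α)(1−α)/Γ(5−α) > 0 and ψ(1,1)ψ(2,2) − ψ(1,2)² = α(1−α)²(2−α)(6−α)/(Γ(4−α)Γ(5−α)) > 0. -/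
open Real Matrix

lemma Matrix.posDef_of_fin_two {a b c : ℝ} (ha : 0 < a) (hdet : 0 < a * c - b ^ 2) :
    (Matrix.of ![![a, b], ![b, c]]).PosDef := by
  refine posDef_iff_dotProduct_mulVec.mpr ⟨?_, fun x hx => ?_⟩
  · ext i j
    fin_cases i <;> fin_cases j <;> rfl
  have hquad : star x ⬝ᵥ (of ![![a, b], ![b, c]] *ᵥ x)
      = a * x 0 ^ 2 + 2 * b * x 0 * x 1 + c * x 1 ^ 2 := by
    simp only [dotProduct, Pi.star_apply, star_trivial, mulVec, of_apply, cons_val',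
      cons_val_fin_one, Fin.sum_univ_two, cons_val_zero, cons_val_one]
    ring
  have hsquare : a * (a * x 0 ^ 2 + 2 * b * x 0 * x 1 + c * x 1 ^ 2)
      = (a * x 0 + b * x 1) ^ 2 + (a * c - b ^ 2) * x 1 ^ 2 := by ring
  rw [hquad]
  refine pos_of_mul_pos_right (hsquare ▸ ?_) ha.le
  rcases eq_or_ne (x 1) 0 with h1 | h1
  · have h0 : x 0 ≠ 0 := fun h0 => hx (funext fun i => by fin_cases i <;> simp [h0, h1])
    simpa [h1] using pow_two_pos_of_ne_zero (mul_ne_zero ha.ne' h0)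
  · exact add_pos_of_nonneg_of_pos (sq_nonneg _) (mul_pos hdet (pow_two_pos_of_ne_zero h1))

lemma psi_comm (α : ℝ) (i j : ℕ) : psi α i j = psi α j i := by
  simp only [psi, add_comm (i : ℝ) j]
  ring

lemma Real.Gamma_add_one_sub {s α : ℝ} (h : α ≠ s) :
    Gamma (s + 1 - α) = (s - α) * Gamma (s - α) := by
  rw [add_sub_right_comm, Gamma_add_one (sub_ne_zero.mpr h.symm)]

section psi_values

variable {α : ℝ}

lemma psi_one_one (hα : α < 1) : psi α 1 1 = 2 * (1 - α) / Gamma (3 - α) := by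
  have h3 := Gamma_add_one_sub (s := 2) (by linarith : α ≠ 2)
  have hg : Gamma (2 - α) ≠ 0 := (Gamma_pos_of_pos (by linarith)).ne'
  have h2 : (2 : ℝ) - α ≠ 0 := by linarith
  norm_num [psi] at h3 ⊢
  rw [h3]
  field_simp
  ring

lemma psi_one_two (hα : α < 1) : psi α 1 2 = (1 - α) * (6 - α) / Gamma (4 - α) := by
  have h3 := Gamma_add_one_sub (s := 2) (by linarith : α ≠ 2)
  have h4 := Gamma_add_one_sub (s := 3) (by linarith : α ≠ 3)
  have hg : Gamma (2 - α) ≠ 0 := (Gamma_pos_of_pos (by linarith)).ne'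
  have h2 : (2 : ℝ) - α ≠ 0 := by linarith
  have h3' : (3 : ℝ) - α ≠ 0 := by linarith
  norm_num [psi] at h3 h4 ⊢
  rw [h4, h3]
  field_simp
  ring

lemma psi_two_two (hα : α < 1) : psi α 2 2 = 4 * (6 - α) * (1 - α) / Gamma (5 - α) := by
  have h4 := Gamma_add_one_sub (s := 3) (by linarith : α ≠ 3)
  have h5 := Gamma_add_one_sub (s := 4) (by linarith : α ≠ 4)
  have hg : Gamma (3 - α) ≠ 0 := (Gamma_pos_of_pos (by linarith)).ne'
  have h3' : (3 : ℝ) - α ≠ 0 := by linarith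
  have h4' : (4 : ℝ) - α ≠ 0 := by linarith
  norm_num [psi] at h4 h5 ⊢
  rw [h5, h4]
  field_simp
  ring

lemma psi_det (hα : α < 1) :
    psi α 1 1 * psi α 2 2 - psi α 1 2 ^ 2
      = α * (1 - α) ^ 2 * (2 - α) * (6 - α) / (Gamma (4 - α) * Gamma (5 - α)) := by
  have h4 := Gamma_add_one_sub (s := 3) (by linarith : α ≠ 3)
  have h5 := Gamma_add_one_sub (s := 4) (by linarith : α ≠ 4)
  have hg : Gamma (3 - α) ≠ 0 := (Gamma_pos_of_pos (by linarith)).ne'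
  have h3' : (3 : ℝ) - α ≠ 0 := by linarith
  have h4' : (4 : ℝ) - α ≠ 0 := by linarith
  norm_num at h4 h5
  rw [psi_one_one hα, psi_one_two hα, psi_two_two hα, h5, h4]
  field_simp
  ring

end psi_values

/-- The 2×2 matrix (ψ(2,2), ψ(1,2); ψ(2,1), ψ(1,1)) is positive definite, with the
explicit values of its leading principal minors. -/
theorem psi_two_by_two_posDef (α : ℝ) (hα : α ∈ Set.Ioo (0:ℝ) 1) :
    (Matrix.of ![![psi α 2 2, psi α 1 2], ![psi α 2 1, psi α 1 1]]).PosDef ∧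
      psi α 2 2 = 4 * (6 - α) * (1 - α) / Real.Gamma (5 - α) ∧
      0 < psi α 2 2 ∧
      psi α 1 1 * psi α 2 2 - psi α 1 2 ^ 2
        = α * (1 - α) ^ 2 * (2 - α) * (6 - α) / (Real.Gamma (4 - α) * Real.Gamma (5 - α)) ∧
      0 < psi α 1 1 * psi α 2 2 - psi α 1 2 ^ 2 := by
  obtain ⟨hα0, hα1⟩ := hα
  have hΓ4 : 0 < Gamma (4 - α) := Gamma_pos_of_pos (by linarith)
  have hΓ5 : 0 < Gamma (5 - α) := Gamma_pos_of_pos (by linarith)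
  have hψ22 : 0 < psi α 2 2 := by
    rw [psi_two_two hα1]
    exact div_pos (mul_pos (mul_pos four_pos (by linarith)) (by linarith)) hΓ5
  have hdet : 0 < psi α 1 1 * psi α 2 2 - psi α 1 2 ^ 2 := by
    rw [psi_det hα1]
    have : 0 < α * (1 - α) ^ 2 * (2 - α) * (6 - α) := by
      have := pow_pos (sub_pos.mpr hα1) 2
      apply_rules [mul_pos] <;> linarith
    exact div_pos this (mul_pos hΓ4 hΓ5)
  refine ⟨?_, psi_two_two hα1, hψ22, psi_det hα1, hdet⟩
  rw [psi_comm α 2 1]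
  exact posDef_of_fin_two hψ22 (by linarith)
end

section
/- Let α ∈ (0,1), t₀ ∈ ℝ, and let P be a real polynomial. Then for every t > t₀: cD^α_{t₀,t}[P(t)²] ≤ 2 [cD^α_{t₀,t} P(t)] · P(t), where cD^α_{t₀,t} denotes the Caputo fractional derivative of order α at t₀. -/
/-- The Riemann–Liouville fractional derivative of order α at t₀. -/
noncomputable def riemannLiouvilleDeriv (α t₀ : ℝ) (f : ℝ → ℝ) (t : ℝ) : ℝ :=
  deriv (fun τ => (Real.Gamma (1 - α))⁻¹ * ∫ s in t₀..τ, (τ - s) ^ (-α) * f s) t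

/-- The Caputo fractional derivative of order α at t₀. -/
noncomputable def caputoDeriv (α t₀ : ℝ) (f : ℝ → ℝ) (t : ℝ) : ℝ :=
  riemannLiouvilleDeriv α t₀ (fun s => f s - f t₀) t

/-!
For a polynomial `R` and `t₀ < t`, the Caputo derivative is given by the classical formula
`Γ(1 - α)⁻¹ ∫_{t₀}^t (t - s)^(-α) R'(s) ds`. It suffices to check this on the monomials
`(s - t₀)^k`, whose Abel integrals are `B(k + 1, 1 - α) (t - t₀)^(k + 1 - α)`, and there it is the
Beta recursion `(k + 2 - α) B(k + 2, 1 - α) = (k + 1) B(k + 1, 1 - α)`.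

By linearity, `cD(P²)(t) - 2 P(t) cD(P)(t)` is then the Caputo derivative at `t` of
`Q = (P - P(t))²`, a nonnegative polynomial vanishing at `t`. Writing `Q(s) = (t - s) ρ(s)` with
`ρ ≥ 0` on `[t₀, t]` and integrating by parts against `(t - s)^(1 - α)` gives
`∫_{t₀}^t (t - s)^(-α) Q'(s) ds = -(t - t₀)^(1 - α) ρ(t₀) - α ∫_{t₀}^t (t - s)^(-α) ρ(s) ds ≤ 0`.
-/

open MeasureTheory Polynomial Set

/-- `riemannLiouvilleDeriv α t₀ f` is by definition the derivative of
`Γ(1 - α)⁻¹ * abelIntegral α t₀ f`. -/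
noncomputable def abelIntegral (α t₀ : ℝ) (f : ℝ → ℝ) (τ : ℝ) : ℝ :=
  ∫ s in t₀..τ, (τ - s) ^ (-α) * f s

section AbelIntegral

variable {α a b t₀ τ : ℝ} {f g f' : ℝ → ℝ}

lemma intervalIntegrable_abelKernel_mul (hα : α < 1) (hf : Continuous f) (a b : ℝ) :
    IntervalIntegrable (fun s => (b - s) ^ (-α) * f s) volume a b := by
  have h := (intervalIntegral.intervalIntegrable_rpow' (a := b - a) (b := 0)
    (by linarith : -1 < -α)).comp_sub_left b
  rw [sub_sub_cancel, sub_zero] at h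
  exact h.mul_continuousOn hf.continuousOn

lemma abelIntegral_add (hα : α < 1) (hf : Continuous f) (hg : Continuous g) :
    abelIntegral α t₀ (fun s => f s + g s) τ = abelIntegral α t₀ f τ + abelIntegral α t₀ g τ := by
  simp only [abelIntegral, mul_add]
  exact intervalIntegral.integral_add (intervalIntegrable_abelKernel_mul hα hf _ _)
    (intervalIntegrable_abelKernel_mul hα hg _ _)

lemma abelIntegral_sub (hα : α < 1) (hf : Continuous f) (hg : Continuous g) :
    abelIntegral α t₀ (fun s => f s - g s) τ = abelIntegral α t₀ f τ - abelIntegral α t₀ g τ := by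
  simp only [abelIntegral, mul_sub]
  exact intervalIntegral.integral_sub (intervalIntegrable_abelKernel_mul hα hf _ _)
    (intervalIntegrable_abelKernel_mul hα hg _ _)

lemma abelIntegral_const_mul (c : ℝ) :
    abelIntegral α t₀ (fun s => c * f s) τ = c * abelIntegral α t₀ f τ := by
  simp only [abelIntegral, mul_left_comm _ c, intervalIntegral.integral_const_mul]

lemma abelIntegral_nonneg (hab : a ≤ b) (hf : ∀ s ∈ Icc a b, 0 ≤ f s) :
    0 ≤ abelIntegral α a f b :=
  intervalIntegral.integral_nonneg hab fun s hs =>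
    mul_nonneg (Real.rpow_nonneg (sub_nonneg.2 hs.2) _) (hf s hs)

/-- Integration by parts against `(b - s) ^ (1 - α)`, whose boundary term vanishes at `s = b`. -/
lemma abelIntegral_sub_mul_deriv (hα : α < 1) (hab : a ≤ b)
    (hf : ∀ x, HasDerivAt f (f' x) x) (hf' : Continuous f') :
    abelIntegral α a (fun s => (b - s) * f' s - (1 - α) * f s) b = -((b - a) ^ (1 - α) * f a) := by
  have hf_cont : Continuous f := continuous_iff_continuousAt.2 fun x => (hf x).continuousAt
  have hG : ContinuousOn (fun s => (b - s) ^ (1 - α) * f s) (Icc a b) :=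
    (((continuous_const.sub continuous_id).rpow_const fun _ => Or.inr (by linarith)).mul
      hf_cont).continuousOn
  have hG' : ∀ x ∈ Ioo a b, HasDerivAt (fun s => (b - s) ^ (1 - α) * f s)
      ((b - x) ^ (-α) * ((b - x) * f' x - (1 - α) * f x)) x := by
    intro x hx
    have hbx : 0 < b - x := sub_pos.2 hx.2
    have hpow := ((hasDerivAt_id x).const_sub b).rpow_const (p := 1 - α) (Or.inl hbx.ne')
    refine (hpow.mul (hf x)).congr_deriv ?_
    rw [id_eq, show 1 - α - 1 = -α by ring, show 1 - α = -α + 1 by ring, Real.rpow_add_one hbx.ne']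
    ring
  rw [abelIntegral, intervalIntegral.integral_eq_sub_of_hasDerivAt_of_le hab hG hG'
    (intervalIntegrable_abelKernel_mul hα (by fun_prop) a b)]
  simp [Real.zero_rpow (by linarith : 1 - α ≠ 0)]

/-- `abelBeta α k` is the Beta value `B(k + 1, 1 - α)`. -/
noncomputable def abelBeta (α : ℝ) (k : ℕ) : ℝ := abelIntegral α 0 (fun s => s ^ k) 1

lemma one_sub_mul_abelBeta_zero (hα : α < 1) : (1 - α) * abelBeta α 0 = 1 := by
  have h := abelIntegral_sub_mul_deriv (a := 0) (b := 1) hα zero_le_one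
    (fun x => hasDerivAt_const x (1 : ℝ)) continuous_const
  rw [show (fun s : ℝ => (1 - s) * 0 - (1 - α) * 1) = fun s => -(1 - α) * s ^ 0 by
    ext; ring, abelIntegral_const_mul] at h
  simp only [sub_zero, Real.one_rpow, mul_one] at h
  rw [abelBeta]
  linarith

lemma abelBeta_succ (hα : α < 1) (k : ℕ) :
    (k + 2 - α) * abelBeta α (k + 1) = (k + 1) * abelBeta α k := by
  have h := abelIntegral_sub_mul_deriv (a := 0) (b := 1) hα zero_le_one
    (fun x => hasDerivAt_pow (k + 1) x) (continuous_const.mul (continuous_pow k))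
  rw [show (fun s : ℝ => (1 - s) * (((k + 1 : ℕ) : ℝ) * s ^ (k + 1 - 1)) - (1 - α) * s ^ (k + 1))
      = fun s => (k + 1) * s ^ k - (k + 2 - α) * s ^ (k + 1) by
      ext; push_cast; ring,
    abelIntegral_sub hα (by fun_prop) (by fun_prop), abelIntegral_const_mul,
    abelIntegral_const_mul] at h
  rw [sub_zero, Real.one_rpow, one_mul, zero_pow k.succ_ne_zero, neg_zero] at h
  simp only [abelBeta]
  linarith

lemma abelIntegral_sub_pow (h : t₀ < τ) (k : ℕ) :
    abelIntegral α t₀ (fun s => (s - t₀) ^ k) τ = abelBeta α k * (τ - t₀) ^ (k + 1 - α) := by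
  have hT : 0 < τ - t₀ := sub_pos.2 h
  have hsub := intervalIntegral.integral_comp_mul_add (a := 0) (b := 1)
    (fun s => (τ - s) ^ (-α) * (s - t₀) ^ k) hT.ne' t₀
  simp only [mul_zero, zero_add, mul_one, sub_add_cancel, add_sub_cancel_right, smul_eq_mul] at hsub
  have hscale : ∫ v in (0 : ℝ)..1, (τ - ((τ - t₀) * v + t₀)) ^ (-α) * ((τ - t₀) * v) ^ k
      = (τ - t₀) ^ (-α) * (τ - t₀) ^ k * abelBeta α k := by
    rw [abelBeta, abelIntegral, ← intervalIntegral.integral_const_mul]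
    refine intervalIntegral.integral_congr fun v hv => ?_
    rw [uIcc_of_le zero_le_one] at hv
    rw [show τ - ((τ - t₀) * v + t₀) = (τ - t₀) * (1 - v) by ring,
      Real.mul_rpow hT.le (sub_nonneg.2 hv.2), mul_pow]
    ring
  rw [hscale] at hsub
  rw [abelIntegral, ← mul_inv_cancel_left₀ hT.ne' (∫ s in t₀..τ, _), ← hsub,
    show (k : ℝ) + 1 - α = k + 1 + -α by ring, Real.rpow_add hT, Real.rpow_add_one hT.ne',
    Real.rpow_natCast]
  ring

lemma hasDerivAt_abelIntegral_sub_pow (h : t₀ < τ) (k : ℕ) :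
    HasDerivAt (abelIntegral α t₀ fun s => (s - t₀) ^ k)
      (abelBeta α k * ((k + 1 - α) * (τ - t₀) ^ ((k : ℝ) - α))) τ := by
  have hpow := ((hasDerivAt_id τ).sub_const t₀).rpow_const (p := k + 1 - α)
    (Or.inl (sub_pos.2 h).ne')
  refine ((hpow.const_mul (abelBeta α k)).congr_deriv ?_).congr_of_eventuallyEq ?_
  · rw [id_eq, show (k : ℝ) + 1 - α - 1 = k - α by ring, one_mul]
  · filter_upwards [lt_mem_nhds h] with τ' hτ' using abelIntegral_sub_pow hτ' k

lemma hasDerivAt_abelIntegral_one (hα : α < 1) (h : t₀ < τ) :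
    HasDerivAt (abelIntegral α t₀ fun _ => 1) ((τ - t₀) ^ (-α)) τ := by
  have hd := hasDerivAt_abelIntegral_sub_pow (α := α) h 0
  simp only [pow_zero, Nat.cast_zero, zero_add, zero_sub] at hd
  rwa [← mul_assoc, mul_comm (abelBeta α 0), one_sub_mul_abelBeta_zero hα, one_mul] at hd

lemma hasDerivAt_abelIntegral_sub_pow_succ (hα : α < 1) (h : t₀ < τ) (k : ℕ) :
    HasDerivAt (abelIntegral α t₀ fun s => (s - t₀) ^ (k + 1))
      ((k + 1) * abelIntegral α t₀ (fun s => (s - t₀) ^ k) τ) τ := by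
  refine (hasDerivAt_abelIntegral_sub_pow h (k + 1)).congr_deriv ?_
  rw [abelIntegral_sub_pow h]
  push_cast
  linear_combination (τ - t₀) ^ ((k : ℝ) + 1 - α) * abelBeta_succ hα k

lemma hasDerivAt_abelIntegral_eval_sub (hα : α < 1) (h : t₀ < τ) (p : ℝ[X]) :
    HasDerivAt (abelIntegral α t₀ fun s => p.eval (s - t₀))
      (p.eval 0 * (τ - t₀) ^ (-α) + abelIntegral α t₀ (fun s => p.derivative.eval (s - t₀)) τ) τ := by
  induction p using Polynomial.induction_on' with
  | add p q hp hq =>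
    have hfun : (abelIntegral α t₀ fun s => (p + q).eval (s - t₀)) = fun τ' =>
        abelIntegral α t₀ (fun s => p.eval (s - t₀)) τ' +
          abelIntegral α t₀ (fun s => q.eval (s - t₀)) τ' := by
      ext τ'
      simp only [eval_add]
      exact abelIntegral_add hα (by fun_prop) (by fun_prop)
    rw [hfun]
    refine (hp.add hq).congr_deriv ?_
    simp only [eval_add, derivative_add]
    rw [abelIntegral_add hα (by fun_prop) (by fun_prop)]
    ring
  | monomial n a =>
    cases n with
    | zero =>
      have hzero : abelIntegral α t₀ (fun _ => 0) τ = 0 := by simp [abelIntegral]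
      simpa [← abelIntegral_const_mul, hzero] using (hasDerivAt_abelIntegral_one hα h).const_mul a
    | succ k =>
      have hd := (hasDerivAt_abelIntegral_sub_pow_succ hα h k).const_mul a
      simp only [← abelIntegral_const_mul] at hd
      simpa [mul_assoc] using hd

lemma hasDerivAt_abelIntegral_eval (hα : α < 1) (h : t₀ < τ) (R : ℝ[X]) :
    HasDerivAt (abelIntegral α t₀ fun s => R.eval s)
      (R.eval t₀ * (τ - t₀) ^ (-α) + abelIntegral α t₀ (fun s => R.derivative.eval s) τ) τ := by
  have hder : (taylor t₀ R).derivative = taylor t₀ R.derivative := by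
    simp [taylor_apply, derivative_comp]
  simpa [taylor_eval, hder] using hasDerivAt_abelIntegral_eval_sub hα h (taylor t₀ R)

lemma caputoDeriv_eval (hα : α < 1) (h : t₀ < τ) (R : ℝ[X]) :
    caputoDeriv α t₀ (fun s => R.eval s) τ
      = (Real.Gamma (1 - α))⁻¹ * abelIntegral α t₀ (fun s => R.derivative.eval s) τ := by
  have hd := hasDerivAt_abelIntegral_eval hα h (R - C (R.eval t₀))
  simp only [eval_sub, eval_C, sub_self, zero_mul, zero_add, derivative_sub, derivative_C,
    sub_zero] at hd
  exact (hd.const_mul _).deriv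

lemma abelIntegral_derivative_nonpos (hα₀ : 0 ≤ α) (hα₁ : α < 1) (hab : a ≤ b) (Q : ℝ[X])
    (hQb : Q.eval b = 0) (hQ : ∀ s ∈ Icc a b, 0 ≤ Q.eval s) :
    abelIntegral α a (fun s => Q.derivative.eval s) b ≤ 0 := by
  rcases hab.eq_or_lt with rfl | hab
  · simp [abelIntegral]
  set ρ := -(Q /ₘ (X - C b))
  have hQρ : Q = (C b - X) * ρ := by
    rw [show C b - X = -(X - C b) by ring, neg_mul_neg, mul_divByMonic_eq_iff_isRoot.2 hQb]
  have hρ : ∀ s ∈ Icc a b, 0 ≤ ρ.eval s := by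
    have hρIco : Ico a b ⊆ {s | 0 ≤ ρ.eval s} := fun s hs => by
      have := hQ s (Ico_subset_Icc_self hs)
      rw [hQρ, eval_mul, eval_sub, eval_C, eval_X] at this
      exact (mul_nonneg_iff_of_pos_left (sub_pos.2 hs.2)).1 this
    rw [← closure_Ico hab.ne]
    exact closure_minimal hρIco (isClosed_le continuous_const ρ.continuous)
  have hibp := abelIntegral_sub_mul_deriv hα₁ hab.le (fun x => ρ.hasDerivAt x) ρ.derivative.continuous
  have hQ' : (fun s => Q.derivative.eval s)
      = fun s => ((b - s) * ρ.derivative.eval s - (1 - α) * ρ.eval s) - α * ρ.eval s := by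
    ext s
    rw [hQρ]
    simp only [derivative_mul, derivative_sub, derivative_C, derivative_X, eval_add, eval_mul,
      eval_sub, eval_C, eval_X, eval_zero, eval_one]
    ring
  rw [hQ', abelIntegral_sub hα₁ (by fun_prop) (by fun_prop), hibp, abelIntegral_const_mul]
  have hρa := hρ a (left_mem_Icc.2 hab.le)
  have hρint := abelIntegral_nonneg (α := α) hab.le hρ
  have hpow : 0 ≤ (b - a) ^ (1 - α) := Real.rpow_nonneg (sub_nonneg.2 hab.le) _
  nlinarith [mul_nonneg hpow hρa, mul_nonneg hα₀ hρint]

end AbelIntegral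

/-- The fractional Leibniz inequality for the Caputo derivative of polynomials. -/
theorem caputo_leibniz_inequality_polynomial (α : ℝ) (hα : α ∈ Set.Ioo (0:ℝ) 1)
    (t₀ : ℝ) (P : Polynomial ℝ) (t : ℝ) (ht : t₀ < t) :
    caputoDeriv α t₀ (fun s => P.eval s ^ 2) t
      ≤ 2 * caputoDeriv α t₀ (fun s => P.eval s) t * P.eval t := by
  obtain ⟨hα₀, hα₁⟩ := hα
  set Q := (P - C (P.eval t)) ^ 2
  have hQ' : (fun s => Q.derivative.eval s)
      = fun s => (P ^ 2).derivative.eval s - 2 * P.eval t * P.derivative.eval s := by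
    ext s
    simp only [Q, derivative_pow, derivative_sub, derivative_C, Nat.add_one_sub_one, pow_one,
      sub_zero, Nat.cast_ofNat, eval_mul, eval_C, eval_sub]
    ring
  have hQ := abelIntegral_derivative_nonpos hα₀.le hα₁ ht.le Q (by simp [Q])
    (fun s _ => by simp only [Q, eval_pow]; positivity)
  rw [hQ', abelIntegral_sub hα₁ (by fun_prop) (by fun_prop), abelIntegral_const_mul] at hQ
  have hΓ : 0 < (Real.Gamma (1 - α))⁻¹ := inv_pos.2 (Real.Gamma_pos_of_pos (by linarith))
  simp only [← eval_pow]
  rw [caputoDeriv_eval hα₁ ht, caputoDeriv_eval hα₁ ht]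
  nlinarith
end

section
/- Let α ∈ (0,1), t₀ ∈ ℝ, and let P be a real polynomial. Then for every t > t₀: D^α_{t₀,t}[P(t)²] ≤ 2 [D^α_{t₀,t} P(t)] · P(t), where D^α_{t₀,t} denotes the Riemann–Liouville fractional derivative of order α at t₀. -/
/-!
For a polynomial `P` and `x = t - t₀ > 0` the Riemann–Liouville derivative takes the Marchaud form
`D^α P(t) = Γ(1 - α)⁻¹ x^(-α) (P(t) + α ∫₀¹ (P(t) - P(t₀ + x u)) (1 - u)^(-α-1) du)`.
Both sides are linear in `P`, and on `(s - t₀)^k` they agree because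
`(k + 1 - α) B(k + 1, 1 - α) = 1 + α ∑_{i<k} B(i + 1, 1 - α)`, which follows from the recurrence of
the beta function. In this form `2 D^α[P] P - D^α[P²]` is `Γ(1 - α)⁻¹ x^(-α)` times
`P(t)² + α ∫₀¹ (P(t) - P(t₀ + x u))² (1 - u)^(-α-1) du ≥ 0`.
-/

open MeasureTheory Set Polynomial intervalIntegral

/-- The Euler integral `B(k + 1, 1 - α)`. -/
noncomputable def betaMoment (α : ℝ) (k : ℕ) : ℝ :=
  ∫ u in (0:ℝ)..1, u ^ k * (1 - u) ^ (-α)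

section BetaMoment

variable {α β : ℝ}

lemma intervalIntegrable_pow_mul_one_sub_rpow (hβ : -1 < β) (k : ℕ) :
    IntervalIntegrable (fun u : ℝ => u ^ k * (1 - u) ^ β) volume 0 1 := by
  have h := (intervalIntegrable_rpow' (a := 0) (b := 1) hβ).comp_sub_left 1
  simp only [sub_zero, sub_self] at h
  exact h.symm.continuousOn_mul (by fun_prop)

lemma ofReal_integral_pow_mul_one_sub_rpow (k : ℕ) (β : ℝ) :
    ((∫ u in (0:ℝ)..1, u ^ k * (1 - u) ^ β : ℝ) : ℂ) =
      Complex.betaIntegral (k + 1) (β + 1) := by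
  rw [Complex.betaIntegral, ← integral_ofReal]
  refine integral_congr fun u hu => ?_
  rw [uIcc_of_le zero_le_one] at hu
  have h1u : (1 - (u : ℂ)) = ((1 - u : ℝ) : ℂ) := by push_cast; ring
  simp only [add_sub_cancel_right, Complex.cpow_natCast, h1u,
    ← Complex.ofReal_cpow (sub_nonneg.2 hu.2)]
  push_cast
  rfl

lemma integral_pow_mul_one_sub_rpow_add_one (hβ : -1 < β) (k : ℕ) :
    ∫ u in (0:ℝ)..1, u ^ k * (1 - u) ^ (β + 1) =
      (∫ u in (0:ℝ)..1, u ^ k * (1 - u) ^ β) - ∫ u in (0:ℝ)..1, u ^ (k + 1) * (1 - u) ^ β := by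
  rw [← integral_sub (intervalIntegrable_pow_mul_one_sub_rpow hβ k)
    (intervalIntegrable_pow_mul_one_sub_rpow hβ (k + 1))]
  refine integral_congr_Ioo_of_le zero_le_one fun u hu => ?_
  simp only [Real.rpow_add (sub_pos.2 hu.2), Real.rpow_one, pow_succ]
  ring

lemma one_sub_mul_betaMoment_zero (hα : α < 1) : (1 - α) * betaMoment α 0 = 1 := by
  have h := ofReal_integral_pow_mul_one_sub_rpow 0 (-α)
  rw [Nat.cast_zero, zero_add, Complex.betaIntegral_symm,
    Complex.betaIntegral_eval_one_right (by simp [hα])] at h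
  have hne : (-(α : ℂ) + 1) ≠ 0 := by exact_mod_cast (by linarith : -α + 1 ≠ 0)
  apply Complex.ofReal_injective
  push_cast at h ⊢
  rw [betaMoment, h]
  field_simp
  ring

lemma betaMoment_succ (hα : α < 1) (k : ℕ) :
    ((k : ℝ) + 2 - α) * betaMoment α (k + 1) = (k + 1) * betaMoment α k := by
  have h := Complex.betaIntegral_recurrence (u := k + 1) (v := -α + 1)
    (by simp [Nat.cast_add_one_pos]) (by simp [hα])
  have hk := ofReal_integral_pow_mul_one_sub_rpow k (-α + 1)
  have hk1 := ofReal_integral_pow_mul_one_sub_rpow (k + 1) (-α)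
  rw [integral_pow_mul_one_sub_rpow_add_one (by linarith)] at hk
  push_cast at hk hk1
  rw [← hk, ← hk1] at h
  apply Complex.ofReal_injective
  push_cast [betaMoment]
  linear_combination -h

lemma add_one_sub_mul_betaMoment (hα : α < 1) (k : ℕ) :
    ((k : ℝ) + 1 - α) * betaMoment α k = 1 + α * ∑ i ∈ Finset.range k, betaMoment α i := by
  induction k with
  | zero => simpa using one_sub_mul_betaMoment_zero hα
  | succ k ih =>
    rw [Finset.sum_range_succ, mul_add, ← add_assoc, ← ih]
    push_cast
    linear_combination betaMoment_succ hα k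

lemma one_sub_pow_mul_rpow_eq_sum {u : ℝ} (hu : u < 1) (k : ℕ) :
    (1 - u ^ k) * (1 - u) ^ (-α - 1) = ∑ i ∈ Finset.range k, u ^ i * (1 - u) ^ (-α) := by
  have hw : (1 - u) ^ (-α) = (1 - u) ^ (-α - 1) * (1 - u) := by
    rw [← Real.rpow_add_one (sub_pos.2 hu).ne']
    ring_nf
  rw [← Finset.sum_mul, hw, ← mul_assoc, ← geom_sum_mul_neg]
  ring

lemma intervalIntegrable_one_sub_pow_mul_rpow (hα : α < 1) (k : ℕ) :
    IntervalIntegrable (fun u : ℝ => (1 - u ^ k) * (1 - u) ^ (-α - 1)) volume 0 1 := by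
  have hsum : IntervalIntegrable (fun u : ℝ => ∑ i ∈ Finset.range k, u ^ i * (1 - u) ^ (-α))
      volume 0 1 := by
    simpa only [Finset.sum_fn] using IntervalIntegrable.sum (Finset.range k)
      (f := fun i u => u ^ i * (1 - u) ^ (-α)) fun i _ =>
        intervalIntegrable_pow_mul_one_sub_rpow (by linarith) i
  exact hsum.congr_uIoo fun u hu =>
    (one_sub_pow_mul_rpow_eq_sum (hu.2.trans_eq (max_eq_right zero_le_one)) k).symm

lemma integral_one_sub_pow_mul_rpow (hα : α < 1) (k : ℕ) :
    ∫ u in (0:ℝ)..1, (1 - u ^ k) * (1 - u) ^ (-α - 1) = ∑ i ∈ Finset.range k, betaMoment α i := by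
  rw [integral_congr_Ioo_of_le zero_le_one fun u hu => one_sub_pow_mul_rpow_eq_sum hu.2 k,
    integral_finsetSum fun i _ => intervalIntegrable_pow_mul_one_sub_rpow (by linarith) i]
  rfl

end BetaMoment

section Marchaud

variable {α : ℝ}

/-- `Γ(1 - α)` times the Marchaud fractional derivative of order `α` of `g` at `1`, with base
point `0`. -/
noncomputable def scaledMarchaudDeriv (α : ℝ) (g : ℝ → ℝ) : ℝ :=
  g 1 + α * ∫ u in (0:ℝ)..1, (g 1 - g u) * (1 - u) ^ (-α - 1)

theorem scaledMarchaudDeriv_sq_le (hα : 0 ≤ α) {g : ℝ → ℝ}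
    (hg : IntervalIntegrable (fun u => (g 1 - g u) * (1 - u) ^ (-α - 1)) volume 0 1)
    (hg2 : IntervalIntegrable (fun u => (g 1 ^ 2 - g u ^ 2) * (1 - u) ^ (-α - 1)) volume 0 1) :
    scaledMarchaudDeriv α (fun u => g u ^ 2) ≤ 2 * scaledMarchaudDeriv α g * g 1 := by
  have hsq : 2 * g 1 * (∫ u in (0:ℝ)..1, (g 1 - g u) * (1 - u) ^ (-α - 1))
      - ∫ u in (0:ℝ)..1, (g 1 ^ 2 - g u ^ 2) * (1 - u) ^ (-α - 1)
      = ∫ u in (0:ℝ)..1, (g 1 - g u) ^ 2 * (1 - u) ^ (-α - 1) := by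
    rw [← intervalIntegral.integral_const_mul, ← integral_sub (hg.const_mul _) hg2]
    congr 1 with u
    ring
  have hnonneg : 0 ≤ ∫ u in (0:ℝ)..1, (g 1 - g u) ^ 2 * (1 - u) ^ (-α - 1) :=
    integral_nonneg zero_le_one fun u hu =>
      mul_nonneg (sq_nonneg _) (Real.rpow_nonneg (sub_nonneg.2 hu.2) _)
  unfold scaledMarchaudDeriv
  nlinarith [sq_nonneg (g 1), mul_nonneg hα hnonneg]

lemma eval_sub_eval_mul_eq_sum (Q : ℝ[X]) (x u : ℝ) :
    Q.eval x - Q.eval (x * u) = Q.sum fun k a => a * x ^ k * (1 - u ^ k) := by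
  simp only [eval_eq_sum, Polynomial.sum_def, ← Finset.sum_sub_distrib, mul_pow]
  exact Finset.sum_congr rfl fun k _ => by ring

lemma intervalIntegrable_eval_sub_eval_mul (hα : α < 1) (Q : ℝ[X]) (x : ℝ) :
    IntervalIntegrable (fun u => (Q.eval x - Q.eval (x * u)) * (1 - u) ^ (-α - 1))
      volume 0 1 := by
  simp only [eval_sub_eval_mul_eq_sum, Polynomial.sum_def, Finset.sum_mul]
  simpa only [Finset.sum_fn] using IntervalIntegrable.sum Q.support
    (f := fun k u => Q.coeff k * x ^ k * (1 - u ^ k) * (1 - u) ^ (-α - 1)) fun k _ => by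
      simpa only [mul_assoc] using
        (intervalIntegrable_one_sub_pow_mul_rpow hα k).const_mul (Q.coeff k * x ^ k)

theorem scaledMarchaudDeriv_eval_mul (hα : α < 1) (Q : ℝ[X]) (x : ℝ) :
    scaledMarchaudDeriv α (fun u => Q.eval (x * u)) =
      Q.sum fun k a => a * (((k : ℝ) + 1 - α) * betaMoment α k * x ^ k) := by
  have hint : ∫ u in (0:ℝ)..1, (Q.eval x - Q.eval (x * u)) * (1 - u) ^ (-α - 1) =
      Q.sum fun k a => a * x ^ k * ∑ i ∈ Finset.range k, betaMoment α i := by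
    simp only [eval_sub_eval_mul_eq_sum, Polynomial.sum_def, Finset.sum_mul]
    rw [integral_finsetSum fun k _ => by
      simpa only [mul_assoc] using
        (intervalIntegrable_one_sub_pow_mul_rpow hα k).const_mul (Q.coeff k * x ^ k)]
    refine Finset.sum_congr rfl fun k _ => ?_
    simp only [mul_assoc, intervalIntegral.integral_const_mul, integral_one_sub_pow_mul_rpow hα]
  rw [scaledMarchaudDeriv, mul_one, hint, eval_eq_sum, Polynomial.sum_def, Polynomial.sum_def,
    Polynomial.sum_def, Finset.mul_sum, ← Finset.sum_add_distrib]
  refine Finset.sum_congr rfl fun k _ => ?_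
  rw [add_one_sub_mul_betaMoment hα]
  ring

end Marchaud

section RiemannLiouville

variable {α : ℝ}

lemma integral_rpow_mul_pow {y : ℝ} (hy : 0 < y) (k : ℕ) :
    ∫ s in (0:ℝ)..y, (y - s) ^ (-α) * s ^ k = betaMoment α k * y ^ ((k : ℝ) + 1 - α) := by
  have hscale := integral_comp_mul_left (a := 0) (b := 1) (fun s => (y - s) ^ (-α) * s ^ k) hy.ne'
  rw [mul_zero, mul_one, eq_inv_smul_iff₀ hy.ne'] at hscale
  rw [← hscale, betaMoment, smul_eq_mul, ← intervalIntegral.integral_const_mul,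
    ← intervalIntegral.integral_mul_const]
  refine integral_congr fun u hu => ?_
  rw [uIcc_of_le zero_le_one] at hu
  have hpow : y ^ ((k : ℝ) + 1 - α) = y * y ^ k * y ^ (-α) := by
    rw [sub_eq_add_neg, Real.rpow_add hy, Real.rpow_add hy, Real.rpow_one, Real.rpow_natCast]
    ring
  simp only [hpow, show y - y * u = y * (1 - u) by ring,
    Real.mul_rpow hy.le (sub_nonneg.2 hu.2), mul_pow]
  ring

lemma integral_rpow_mul_eval (hα : α < 1) (Q : ℝ[X]) {y : ℝ} (hy : 0 < y) :
    ∫ s in (0:ℝ)..y, (y - s) ^ (-α) * Q.eval s =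
      Q.sum fun k a => a * (betaMoment α k * y ^ ((k : ℝ) + 1 - α)) := by
  have hker : IntervalIntegrable (fun s => (y - s) ^ (-α)) volume 0 y := by
    simpa using ((intervalIntegrable_rpow' (a := 0) (b := y) (r := -α) (by linarith)).comp_sub_left
      y).symm
  simp only [eval_eq_sum, Polynomial.sum_def, Finset.mul_sum, mul_left_comm ((y - _) ^ (-α))]
  rw [integral_finsetSum fun k _ => (hker.mul_continuousOn (by fun_prop)).const_mul (Q.coeff k)]
  simp only [intervalIntegral.integral_const_mul, integral_rpow_mul_pow hy]

theorem hasDerivAt_integral_rpow_mul_eval (hα : α < 1) (P : ℝ[X]) {t₀ t : ℝ} (ht : t₀ < t) :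
    HasDerivAt (fun τ => ∫ s in t₀..τ, (τ - s) ^ (-α) * P.eval s)
      ((t - t₀) ^ (-α) *
        (taylor t₀ P).sum fun k a => a * (((k : ℝ) + 1 - α) * betaMoment α k * (t - t₀) ^ k)) t := by
  have hshift : ∀ τ ∈ Ioi t₀, ∫ s in t₀..τ, (τ - s) ^ (-α) * P.eval s =
      (taylor t₀ P).sum fun k a => a * (betaMoment α k * (τ - t₀) ^ ((k : ℝ) + 1 - α)) := by
    intro τ hτ
    have h := integral_comp_add_right (a := 0) (b := τ - t₀) (fun s => (τ - s) ^ (-α) * P.eval s) t₀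
    simp only [zero_add, sub_add_cancel, ← taylor_eval, sub_add_eq_sub_sub, sub_right_comm τ] at h
    rw [← h, integral_rpow_mul_eval hα _ (sub_pos.2 hτ)]
  refine HasDerivAt.congr_of_eventuallyEq ?_ (Filter.eventually_of_mem (Ioi_mem_nhds ht) hshift)
  simp only [Polynomial.sum_def, Finset.mul_sum]
  refine HasDerivAt.fun_sum fun k _ => ?_
  refine ((((hasDerivAt_id' t).sub_const t₀).rpow_const (p := (k : ℝ) + 1 - α)
    (Or.inl (sub_pos.2 ht).ne')).const_mul (betaMoment α k)).const_mul ((taylor t₀ P).coeff k)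
    |>.congr_deriv ?_
  rw [show (k : ℝ) + 1 - α - 1 = k + -α by ring, Real.rpow_add (sub_pos.2 ht), Real.rpow_natCast]
  ring

theorem riemannLiouvilleDeriv_eval_eq (hα : α < 1) (P : ℝ[X]) {t₀ t : ℝ} (ht : t₀ < t) :
    riemannLiouvilleDeriv α t₀ (fun s => P.eval s) t =
      (Real.Gamma (1 - α))⁻¹ * (t - t₀) ^ (-α) *
        scaledMarchaudDeriv α (fun u => (taylor t₀ P).eval ((t - t₀) * u)) := by
  rw [riemannLiouvilleDeriv, ((hasDerivAt_integral_rpow_mul_eval hα P ht).const_mul _).deriv,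
    scaledMarchaudDeriv_eval_mul hα]
  ring

end RiemannLiouville

/-- The fractional Leibniz inequality for the Riemann–Liouville derivative of
polynomials. -/
theorem riemannLiouville_leibniz_inequality_polynomial (α : ℝ) (hα : α ∈ Set.Ioo (0:ℝ) 1)
    (t₀ : ℝ) (P : Polynomial ℝ) (t : ℝ) (ht : t₀ < t) :
    riemannLiouvilleDeriv α t₀ (fun s => P.eval s ^ 2) t
      ≤ 2 * riemannLiouvilleDeriv α t₀ (fun s => P.eval s) t * P.eval t := by
  obtain ⟨hα0, hα1⟩ := hα
  have hsq : (fun s => P.eval s ^ 2) = fun s => (P ^ 2).eval s := by simp only [eval_pow]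
  have hPt : P.eval t = (taylor t₀ P).eval ((t - t₀) * 1) := by simp [taylor_eval]
  have hc : 0 ≤ (Real.Gamma (1 - α))⁻¹ * (t - t₀) ^ (-α) :=
    mul_nonneg (inv_nonneg.2 (Real.Gamma_pos_of_pos (sub_pos.2 hα1)).le)
      (Real.rpow_nonneg (sub_pos.2 ht).le _)
  rw [hsq, riemannLiouvilleDeriv_eval_eq hα1 _ ht, riemannLiouvilleDeriv_eval_eq hα1 _ ht,
    taylor_pow, hPt]
  generalize taylor t₀ P = Q
  have hQ := intervalIntegrable_eval_sub_eval_mul hα1 Q (t - t₀)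
  have hQ2 := intervalIntegrable_eval_sub_eval_mul hα1 (Q ^ 2) (t - t₀)
  simp only [eval_pow] at hQ2 ⊢
  have hM := scaledMarchaudDeriv_sq_le hα0.le (g := fun u => Q.eval ((t - t₀) * u))
    (by simpa only [mul_one] using hQ) (by simpa only [mul_one] using hQ2)
  linarith [mul_le_mul_of_nonneg_left hM hc]
end

section
/- Let α ∈ (0,1) and λ < 2. Then there exists a real polynomial Q and a point t > 0 such that cD^α_{0,t}[Q(t)²] > λ [cD^α_{0,t} Q(t)] · Q(t). In particular, the constant 2 is sharp in the Caputo fractional Leibniz inequality. (For λ ≤ 2/(2−α) the choice Q(t) = t+1 works for all t > 0; for 2/(2−α) < λ < 2 the same polynomial works for 0 < t < (2−α)(2−λ)/(λ(2−α)−2).) -/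
open Polynomial Filter Topology

/-- The Beta value `B(n + 1, 1 - α)`, left unevaluated. -/
noncomputable def kernelMoment (α : ℝ) (n : ℕ) : ℝ :=
  ∫ u in (0:ℝ)..1, (1 - u) ^ (-α) * u ^ n

/-- The coefficient in `cD^α_{0,t} t^n = caputoPowCoeff α n * t^(n - α)`; in closed form it is
`Γ(n + 1) / Γ(n + 1 - α)`. -/
noncomputable def caputoPowCoeff (α : ℝ) (n : ℕ) : ℝ :=
  (n + 1 - α) * kernelMoment α n / Real.Gamma (1 - α)

theorem Polynomial.eval_sub_eval_zero {R : Type*} [CommRing R] (Q : R[X]) (s : R) :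
    Q.eval s - Q.eval 0 = ∑ n ∈ Finset.range Q.natDegree, Q.coeff (n + 1) * s ^ (n + 1) := by
  simp [eval_eq_sum_range, Finset.sum_range_succ']

section

variable {α : ℝ}

theorem intervalIntegrable_sub_rpow_neg_mul_pow (hα : α < 1) (τ : ℝ) (n : ℕ) :
    IntervalIntegrable (fun s => (τ - s) ^ (-α) * s ^ n) MeasureTheory.volume 0 τ := by
  have hker := (intervalIntegral.intervalIntegrable_rpow' (r := -α) (a := τ) (b := 0)
    (by linarith)).comp_sub_left τ
  rw [sub_self, sub_zero] at hker
  exact hker.mul_continuousOn (continuous_pow n).continuousOn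

theorem integral_sub_rpow_neg_mul_pow {τ : ℝ} (hτ : 0 < τ) (n : ℕ) :
    ∫ s in (0:ℝ)..τ, (τ - s) ^ (-α) * s ^ n = kernelMoment α n * τ ^ ((n:ℝ) + 1 - α) := by
  have hscale : ∀ u ∈ Set.uIcc (0:ℝ) 1,
      (τ - τ * u) ^ (-α) * (τ * u) ^ n = τ ^ ((n:ℝ) - α) * ((1 - u) ^ (-α) * u ^ n) := by
    intro u hu
    rw [Set.uIcc_of_le zero_le_one] at hu
    rw [← mul_one_sub, Real.mul_rpow hτ.le (by linarith [hu.2]), mul_pow, sub_eq_add_neg (n:ℝ),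
      Real.rpow_add hτ, Real.rpow_natCast]
    ring
  have h := intervalIntegral.integral_comp_mul_left
    (fun s => (τ - s) ^ (-α) * s ^ n) hτ.ne' (a := 0) (b := 1)
  rw [intervalIntegral.integral_congr hscale, intervalIntegral.integral_const_mul, mul_zero,
    mul_one, smul_eq_mul, eq_inv_mul_iff_mul_eq₀ hτ.ne'] at h
  rw [kernelMoment, ← h, add_sub_right_comm, Real.rpow_add hτ, Real.rpow_one]
  ring

theorem kernelMoment_pos (hα : α < 1) (n : ℕ) : 0 < kernelMoment α n := by
  refine intervalIntegral.intervalIntegral_pos_of_pos_on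
    (intervalIntegrable_sub_rpow_neg_mul_pow hα 1 n) (fun u hu => ?_) zero_lt_one
  exact mul_pos (Real.rpow_pos_of_pos (by linarith [hu.2]) _) (pow_pos hu.1 n)

theorem caputoPowCoeff_pos (hα : α < 1) (n : ℕ) : 0 < caputoPowCoeff α n := by
  have hn : (0:ℝ) < n + 1 - α := by have := n.cast_nonneg (α := ℝ); linarith
  exact div_pos (mul_pos hn (kernelMoment_pos hα n)) (Real.Gamma_pos_of_pos (by linarith))

theorem caputoDeriv_polynomial_eval (hα : α < 1) (Q : ℝ[X]) {t : ℝ} (ht : 0 < t) :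
    caputoDeriv α 0 (fun s => Q.eval s) t =
      ∑ n ∈ Finset.range Q.natDegree,
        Q.coeff (n + 1) * caputoPowCoeff α (n + 1) * t ^ (((n + 1 : ℕ) : ℝ) - α) := by
  set c := fun n : ℕ => Q.coeff (n + 1) * kernelMoment α (n + 1) / Real.Gamma (1 - α)
  have hint : ∀ τ, 0 < τ → (Real.Gamma (1 - α))⁻¹ *
      ∫ s in (0:ℝ)..τ, (τ - s) ^ (-α) * (Q.eval s - Q.eval 0) =
        ∑ n ∈ Finset.range Q.natDegree, c n * τ ^ (((n + 1 : ℕ) : ℝ) + 1 - α) := by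
    intro τ hτ
    simp_rw [Q.eval_sub_eval_zero, Finset.mul_sum, mul_left_comm _ (Q.coeff _)]
    rw [intervalIntegral.integral_finsetSum fun n _ =>
      (intervalIntegrable_sub_rpow_neg_mul_pow hα τ (n + 1)).const_mul _]
    simp_rw [intervalIntegral.integral_const_mul, integral_sub_rpow_neg_mul_pow hτ, Finset.mul_sum]
    refine Finset.sum_congr rfl fun n _ => ?_
    simp only [c]
    ring
  have hderiv : HasDerivAt
      (fun τ => ∑ n ∈ Finset.range Q.natDegree, c n * τ ^ (((n + 1 : ℕ) : ℝ) + 1 - α))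
      (∑ n ∈ Finset.range Q.natDegree,
        Q.coeff (n + 1) * caputoPowCoeff α (n + 1) * t ^ (((n + 1 : ℕ) : ℝ) - α)) t := by
    refine HasDerivAt.fun_sum fun n _ => ?_
    refine ((Real.hasDerivAt_rpow_const (p := ((n + 1 : ℕ) : ℝ) + 1 - α)
      (Or.inl ht.ne')).const_mul (c n)).congr_deriv ?_
    rw [sub_right_comm _ α 1, add_sub_cancel_right]
    simp only [c, caputoPowCoeff]
    ring
  rw [caputoDeriv, riemannLiouvilleDeriv,
    (eventuallyEq_of_mem (Ioi_mem_nhds ht) hint).deriv_eq]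
  exact hderiv.deriv

end

/-- Sharpness of the constant 2 in the Caputo fractional Leibniz inequality: for any
λ < 2 there are a polynomial Q and a time t > 0 at which the inequality with constant λ
fails. -/
theorem caputo_leibniz_constant_sharp (α : ℝ) (hα : α ∈ Set.Ioo (0:ℝ) 1)
    (lam : ℝ) (hlam : lam < 2) :
    ∃ Q : Polynomial ℝ, ∃ t : ℝ, 0 < t ∧
      lam * (caputoDeriv α 0 (fun s => Q.eval s) t * Q.eval t)
        < caputoDeriv α 0 (fun s => Q.eval s ^ 2) t := by
  set a := caputoPowCoeff α 1
  set b := caputoPowCoeff α 2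
  obtain ⟨t, hlt, ht⟩ : ∃ t, lam * a * (t + 1) < 2 * a + b * t ∧ 0 < t := by
    have ha : 0 < a := caputoPowCoeff_pos hα.2 1
    have hnear : ∀ᶠ t in 𝓝 (0:ℝ), lam * a * (t + 1) < 2 * a + b * t :=
      ContinuousAt.eventually_lt (by fun_prop) (by fun_prop) (by nlinarith)
    exact ((hnear.filter_mono (nhdsWithin_le_nhds (s := Set.Ioi 0))).and self_mem_nhdsWithin).exists
  refine ⟨X + C 1, t, ht, ?_⟩
  have hQ : caputoDeriv α 0 (fun s => (X + C 1 : ℝ[X]).eval s) t = a * t ^ (1 - α) := by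
    rw [caputoDeriv_polynomial_eval hα.2 _ ht, natDegree_X_add_C]
    simp [coeff_one, a]
  have hQsq : caputoDeriv α 0 (fun s => (X + C 1 : ℝ[X]).eval s ^ 2) t =
      (2 * a + b * t) * t ^ (1 - α) := by
    simp_rw [← eval_pow]
    rw [caputoDeriv_polynomial_eval hα.2 _ ht, natDegree_pow, natDegree_X_add_C]
    simp only [Finset.sum_range_succ, Finset.sum_range_zero, coeff_X_add_C_pow]
    norm_num
    rw [show (2:ℝ) - α = 1 + (1 - α) by ring, Real.rpow_add ht, Real.rpow_one]
    ring
  rw [hQ, hQsq, eval_add, eval_X, eval_C]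
  have hp := Real.rpow_pos_of_pos ht (1 - α)
  nlinarith [mul_lt_mul_of_pos_right hlt hp]
end
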